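/- Let A be an n × n real matrix all of whose complex eigenvalues have negative real part. Then there exist constants C > 0 and a > 0 such that for all t ≥ 0 and all n × n real matrices X, ‖exp(tA) X‖ ≤ C exp(-a t) ‖X‖, where ‖·‖ is the operator norm on matrices. -/

import Mathlib

/-!
If `‖exp (T • x)‖ < 1` for one time `T > 0`, then `t ↦ exp (t • x)` decays exponentially: for a
small `a > 0` the shifted semigroup `exp (t • (x + a)) = exp (a t) • exp (t • x)` is still
contractive at time `T`, hence bounded on `[0, ∞)`, being bounded on the compact `[0, T]`.

For a real matrix `A` whose complexification `B` is Hurwitz, such a time exists: every eigenvalue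
of `exp B` is `exp λ` for an eigenvalue `λ` of `B` (a common eigenvector of the commuting `B` and
`exp B`), so the spectral radius of `exp B` is `< 1`, and Gelfand's formula gives `‖exp B ^ k‖ < 1`
for some `k`. The real operator norm is at most the complex one, so `‖exp (k • A)‖ < 1`.
-/

open NormedSpace Filter WithLp
open scoped Matrix.Norms.L2Operator

section RealBanachAlgebra

variable {𝔸 : Type*} [NormedRing 𝔸] [NormedAlgebra ℝ 𝔸] [CompleteSpace 𝔸]

lemma exp_add_smul (s t : ℝ) (x : 𝔸) : exp ((s + t) • x) = exp (s • x) * exp (t • x) := by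
  let +nondep : NormedAlgebra ℚ 𝔸 := .restrictScalars ℚ ℝ 𝔸
  rw [add_smul, exp_add_of_commute (((Commute.refl x).smul_left s).smul_right t)]

lemma continuous_exp_smul (x : 𝔸) : Continuous fun t : ℝ ↦ exp (t • x) := by
  let +nondep : NormedAlgebra ℚ 𝔸 := .restrictScalars ℚ ℝ 𝔸
  fun_prop

lemma exp_smul_add_algebraMap (t c : ℝ) (x : 𝔸) :
    exp (t • (x + algebraMap ℝ 𝔸 c)) = Real.exp (t * c) • exp (t • x) := by
  let +nondep : NormedAlgebra ℚ 𝔸 := .restrictScalars ℚ ℝ 𝔸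
  have hsmul : t • algebraMap ℝ 𝔸 c = algebraMap ℝ 𝔸 (t * c) := by
    rw [Algebra.smul_def, map_mul]
  rw [smul_add, hsmul, exp_add_of_commute (Algebra.commute_algebraMap_right _ _),
    ← algebraMap_exp_comm, ← Real.exp_eq_exp_ℝ, ← Algebra.commutes, ← Algebra.smul_def]

lemma exists_bound_norm_exp_smul_of_norm_exp_smul_le_one {x : 𝔸} {T : ℝ} (hT : 0 < T)
    (hx : ‖exp (T • x)‖ ≤ 1) : ∃ M, ∀ t : ℝ, 0 ≤ t → ‖exp (t • x)‖ ≤ M := by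
  obtain ⟨M, hM⟩ := (isCompact_Icc (a := 0) (b := T)).exists_bound_of_continuousOn
    (continuous_exp_smul x).continuousOn
  have hle : ∀ m : ℕ, ∀ t : ℝ, 0 ≤ t → t ≤ m * T → ‖exp (t • x)‖ ≤ M := by
    intro m
    induction m with
    | zero => exact fun t ht0 ht ↦ hM t ⟨ht0, by simp at ht; linarith⟩
    | succ m ih =>
      intro t ht0 ht
      rcases le_total t T with htT | hTt
      · exact hM t ⟨ht0, htT⟩
      calc ‖exp (t • x)‖ = ‖exp (T • x) * exp ((t - T) • x)‖ := by
            rw [← exp_add_smul, add_sub_cancel]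
        _ ≤ ‖exp (T • x)‖ * ‖exp ((t - T) • x)‖ := norm_mul_le _ _
        _ ≤ ‖exp ((t - T) • x)‖ := mul_le_of_le_one_left (norm_nonneg _) hx
        _ ≤ M := ih _ (by linarith) (by push_cast at ht; linarith)
  refine ⟨M, fun t ht ↦ ?_⟩
  obtain ⟨m, hm⟩ := exists_nat_ge (t / T)
  exact hle m t ht ((div_le_iff₀ hT).mp hm)

theorem exists_norm_exp_smul_le_of_norm_exp_smul_lt_one {x : 𝔸} {T : ℝ} (hT : 0 < T)
    (hx : ‖exp (T • x)‖ < 1) :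
    ∃ C, 0 < C ∧ ∃ a, 0 < a ∧ ∀ t : ℝ, 0 ≤ t → ‖exp (t • x)‖ ≤ C * Real.exp (-a * t) := by
  set ρ := ‖exp (T • x)‖
  set a := (1 - ρ) / T
  have ha : 0 < a := div_pos (by linarith) hT
  have hy : ‖exp (T • (x + algebraMap ℝ 𝔸 a))‖ ≤ 1 := by
    have hTa : T * a = 1 - ρ := mul_div_cancel₀ _ hT.ne'
    rw [exp_smul_add_algebraMap, norm_smul, Real.norm_of_nonneg (Real.exp_pos _).le, hTa]
    calc Real.exp (1 - ρ) * ρ ≤ Real.exp (1 - ρ) * Real.exp (ρ - 1) := by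
          gcongr; linarith [Real.add_one_le_exp (ρ - 1)]
      _ = 1 := by rw [← Real.exp_add, show 1 - ρ + (ρ - 1) = 0 by ring, Real.exp_zero]
  obtain ⟨M, hM⟩ := exists_bound_norm_exp_smul_of_norm_exp_smul_le_one hT hy
  refine ⟨max M 1, by positivity, a, ha, fun t ht ↦ ?_⟩
  have hshift := hM t ht
  rw [exp_smul_add_algebraMap, norm_smul, Real.norm_of_nonneg (Real.exp_pos _).le] at hshift
  calc ‖exp (t • x)‖ = Real.exp (-a * t) * (Real.exp (t * a) * ‖exp (t • x)‖) := by
        rw [← mul_assoc, ← Real.exp_add, show -a * t + t * a = 0 by ring, Real.exp_zero, one_mul]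
    _ ≤ Real.exp (-a * t) * max M 1 := by gcongr; exact hshift.trans (le_max_left _ _)
    _ = max M 1 * Real.exp (-a * t) := mul_comm _ _

end RealBanachAlgebra

theorem eventually_norm_pow_lt_one {A : Type*} [NormedRing A] [NormedAlgebra ℂ A] [CompleteSpace A]
    {a : A} (ha : ∀ z ∈ spectrum ℂ a, ‖z‖ < 1) : ∀ᶠ k : ℕ in atTop, ‖a ^ k‖ < 1 := by
  rcases subsingleton_or_nontrivial A with hA | hA
  · exact Eventually.of_forall fun k ↦ by simp [Subsingleton.elim (a ^ k) 0]
  have hρ : spectralRadius ℂ a < 1 := by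
    simpa using spectrum.spectralRadius_lt_of_forall_lt a (r := 1) fun z hz ↦ by
      exact_mod_cast ha z hz
  filter_upwards
    [(spectrum.pow_norm_pow_one_div_tendsto_nhds_spectralRadius a).eventually_lt_const hρ] with k hk
  by_contra! h
  exact (ENNReal.ofReal_lt_one.mp hk).not_ge (Real.one_le_rpow h (by positivity))

lemma EuclideanSpace.norm_toLp_ofReal {ι : Type*} [Fintype ι] (w : ι → ℝ) :
    ‖(toLp 2 fun i ↦ (w i : ℂ) : EuclideanSpace ℂ ι)‖ = ‖(toLp 2 w : EuclideanSpace ℝ ι)‖ := by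
  simp [EuclideanSpace.norm_eq]

namespace Matrix

theorem l2_opNorm_le_l2_opNorm_map_ofReal {m n : Type*} [Fintype m] [Fintype n] [DecidableEq n]
    (M : Matrix m n ℝ) : ‖M‖ ≤ ‖M.map (Complex.ofReal ·)‖ := by
  rw [l2_opNorm_def]
  refine ContinuousLinearMap.opNorm_le_bound _ (norm_nonneg _) fun x ↦ ?_
  have hmul : M.map (Complex.ofReal ·) *ᵥ (fun i ↦ (x i : ℂ)) = fun i ↦ ((M *ᵥ x.ofLp) i : ℂ) :=
    funext fun i ↦ (RingHom.map_mulVec Complex.ofRealHom M x.ofLp i).symm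
  have := l2_opNorm_mulVec (M.map (Complex.ofReal ·)) (toLp 2 fun i ↦ (x i : ℂ))
  rw [ofLp_toLp, hmul] at this
  change ‖(toLp 2 fun i ↦ ((M *ᵥ x.ofLp) i : ℂ) : EuclideanSpace ℂ m)‖ ≤ _ at this
  rwa [EuclideanSpace.norm_toLp_ofReal, EuclideanSpace.norm_toLp_ofReal] at this

variable {ι : Type*} [Fintype ι] [DecidableEq ι]

theorem exp_map_ofReal (M : Matrix ι ι ℝ) :
    (exp M).map (Complex.ofReal ·) = exp (M.map (Complex.ofReal ·)) := by
  let +nondep : NormedAlgebra ℚ (Matrix ι ι ℝ) := .restrictScalars ℚ ℝ _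
  exact map_exp Complex.ofRealHom.mapMatrix (continuous_id.matrix_map Complex.continuous_ofReal) M

theorem exp_mulVec_of_mulVec_eq_smul {𝕂 : Type*} [RCLike 𝕂] {B : Matrix ι ι 𝕂} {v : ι → 𝕂}
    {μ : 𝕂} (hv : B *ᵥ v = μ • v) : exp B *ᵥ v = exp μ • v := by
  have hpow : ∀ k : ℕ, B ^ k *ᵥ v = μ ^ k • v := by
    intro k
    induction k with
    | zero => simp
    | succ k ih => rw [pow_succ, ← mulVec_mulVec, hv, mulVec_smul, ih, smul_smul, ← pow_succ']
  have hB := (exp_series_hasSum_exp' (𝕂 := 𝕂) B).map (mulVec.addMonoidHomLeft v)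
    (continuous_id.matrix_mulVec continuous_const)
  refine hB.unique ?_
  convert (exp_series_hasSum_exp' (𝕂 := 𝕂) μ).smul_const v using 2 with k
  simp [mulVec.addMonoidHomLeft, smul_mulVec, hpow, smul_smul]

theorem spectrum_exp_subset (B : Matrix ι ι ℂ) :
    spectrum ℂ (exp B) ⊆ Complex.exp '' spectrum ℂ B := by
  intro μ hμ
  set f : Module.End ℂ (ι → ℂ) := toLinAlgEquiv' B
  set g : Module.End ℂ (ι → ℂ) := toLinAlgEquiv' (exp B)
  have hg : g.HasEigenvalue μ := by
    rwa [Module.End.hasEigenvalue_iff_mem_spectrum, AlgEquiv.spectrum_eq]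
  have hfg : Commute f g := ((Commute.refl B).exp_right).map toLinAlgEquiv'
  have : Nontrivial (g.eigenspace μ) := Submodule.nontrivial_iff_ne_bot.mpr hg
  obtain ⟨l, hl⟩ := Module.End.exists_eigenvalue
    (f.restrict (Module.End.mapsTo_genEigenspace_of_comm hfg.symm μ 1))
  obtain ⟨⟨u, hu⟩, hlu⟩ := hl.exists_hasEigenvector
  have hfu : f.HasEigenvector l u :=
    ⟨Module.End.mem_eigenspace_iff.mpr (congrArg Subtype.val hlu.apply_eq_smul),
      fun h ↦ hlu.2 (Subtype.ext h)⟩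
  have hBu : B *ᵥ u = l • u := hfu.apply_eq_smul
  have hgu : exp B *ᵥ u = μ • u := Module.End.mem_eigenspace_iff.mp hu
  refine ⟨l, ?_, ?_⟩
  · rw [← AlgEquiv.spectrum_eq toLinAlgEquiv', ← Module.End.hasEigenvalue_iff_mem_spectrum]
    exact Module.End.hasEigenvalue_of_hasEigenvector hfu
  · refine smul_left_injective ℂ hfu.2 ?_
    show Complex.exp l • u = μ • u
    rw [← hgu, Complex.exp_eq_exp_ℂ, ← exp_mulVec_of_mulVec_eq_smul hBu]

theorem exists_norm_exp_smul_lt_one (A : Matrix ι ι ℝ)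
    (hA : ∀ μ ∈ spectrum ℂ (A.map (Complex.ofReal ·)), μ.re < 0) :
    ∃ T : ℝ, 0 < T ∧ ‖exp (T • A)‖ < 1 := by
  set B := A.map (Complex.ofReal ·)
  have hspec : ∀ z ∈ spectrum ℂ (exp B), ‖z‖ < 1 := by
    intro z hz
    obtain ⟨l, hl, rfl⟩ := spectrum_exp_subset B hz
    rw [Complex.norm_exp, Real.exp_lt_one_iff]
    exact hA l hl
  obtain ⟨k, hk, hk0⟩ := ((eventually_norm_pow_lt_one hspec).and (eventually_gt_atTop 0)).exists
  refine ⟨k, Nat.cast_pos.mpr hk0, ?_⟩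
  calc ‖exp ((k : ℝ) • A)‖ ≤ ‖(exp ((k : ℝ) • A)).map (Complex.ofReal ·)‖ :=
        l2_opNorm_le_l2_opNorm_map_ofReal _
    _ = ‖exp B ^ k‖ := by
        rw [exp_map_ofReal, ← exp_nsmul, Nat.cast_smul_eq_nsmul]
        exact congr(‖exp $(map_nsmul Complex.ofRealHom.mapMatrix k A)‖)
    _ < 1 := hk

end Matrix

/-- Hurwitz stability of `A` gives an exponential decay estimate, in the operator norm
induced by the Euclidean norm, for the flow `X ↦ exp(tA) X` on matrices. -/
theorem stmt7 {n : ℕ} (A : Matrix (Fin n) (Fin n) ℝ)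
    (hA : ∀ μ ∈ spectrum ℂ (A.map (Complex.ofReal ·)), μ.re < 0) :
    ∃ C : ℝ, 0 < C ∧ ∃ a : ℝ, 0 < a ∧ ∀ t : ℝ, 0 ≤ t → ∀ X : Matrix (Fin n) (Fin n) ℝ,
      ‖Matrix.toEuclideanCLM (𝕜 := ℝ) (exp (t • A) * X)‖ ≤
        C * Real.exp (-a * t) * ‖Matrix.toEuclideanCLM (𝕜 := ℝ) X‖ := by
  obtain ⟨T, hT, hexpT⟩ := A.exists_norm_exp_smul_lt_one hA
  obtain ⟨C, hC, a, ha, hdecay⟩ := exists_norm_exp_smul_le_of_norm_exp_smul_lt_one hT hexpT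
  refine ⟨C, hC, a, ha, fun t ht X ↦ ?_⟩
  simp only [← Matrix.cstar_norm_def]
  calc ‖exp (t • A) * X‖ ≤ ‖exp (t • A)‖ * ‖X‖ := norm_mul_le _ _
    _ ≤ C * Real.exp (-a * t) * ‖X‖ := by gcongr; exact hdecay t ht
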